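/- For any three affine Boolean functions y_0(u) = α_0 + β_0 u, y_2(v) = α_2 + β_2 v, y_4(w) = α_4 + β_4 w over F2, and any three arbitrary Boolean functions y_1(u,v), y_3(v,w), y_5(u,w) over F2, the five conditions y_0(0)+y_2(0)+y_4(0)=0, y_0(1)+y_2(1)+y_4(0)+y_1(1,1)=1, y_0(0)+y_2(1)+y_4(1)+y_3(1,1)=1, y_0(1)+y_2(0)+y_4(1)+y_5(1,1)=1, and y_1(1,1)+y_3(1,1)+y_5(1,1)=0 cannot all hold simultaneously. -/
import Mathlib


/-- No depth-1 geometrically restricted classical strategy satisfies all five win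
conditions of the restricted-input 2D HLF game `SS(C₆, I⁽⁵⁾_HLF)`: for affine
`y₀, y₂, y₄ : F₂ → F₂` and arbitrary `y₁, y₃, y₅ : F₂² → F₂`, the five parity
conditions cannot all hold. -/
theorem depth_one_cannot_win_all
    (y₀ y₂ y₄ : ZMod 2 → ZMod 2) (y₁ y₃ y₅ : ZMod 2 → ZMod 2 → ZMod 2)
    (h₀ : ∃ α β : ZMod 2, ∀ u, y₀ u = α + β * u)
    (h₂ : ∃ α β : ZMod 2, ∀ v, y₂ v = α + β * v)
    (h₄ : ∃ α β : ZMod 2, ∀ w, y₄ w = α + β * w) :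
    ¬ (y₀ 0 + y₂ 0 + y₄ 0 = 0 ∧
       y₀ 1 + y₂ 1 + y₄ 0 + y₁ 1 1 = 1 ∧
       y₀ 0 + y₂ 1 + y₄ 1 + y₃ 1 1 = 1 ∧
       y₀ 1 + y₂ 0 + y₄ 1 + y₅ 1 1 = 1 ∧
       y₁ 1 1 + y₃ 1 1 + y₅ 1 1 = 0) := by
  obtain ⟨a0, b0, e0⟩ := h₀
  obtain ⟨a2, b2, e2⟩ := h₂
  obtain ⟨a4, b4, e4⟩ := h₄
  rintro ⟨c1, c2, c3, c4, c5⟩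
  simp only [e0, e2, e4] at c1 c2 c3 c4
  have h : (0 : ZMod 2) = 1 := by
    have two : (2 : ZMod 2) = 0 := rfl
    linear_combination c1 + c2 + c3 + c4 + c5 -
      (2*a0 + 2*a2 + 2*a4 + b0 + b2 + b4 + y₁ 1 1 + y₃ 1 1 + y₅ 1 1) * two + two
  exact absurd h (by decide)
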